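/- arXiv:1709.06960 — 2 statements merged into one kernel-verified Lean document; each statement's English description precedes it below -/
import Mathlib

section
/- With ψ_k = det P_k as above and ψ_1 = χ_0 = -λ, one has ψ_k = Π_{i=0}^{k-1} χ_i for all k ≥ 1, where χ_i = det(A_i - λI). -/
open Matrix Polynomial

/-- `J_k = diag(1,0,...,0)` of order `2^k`. -/
noncomputable def Jmat (k : ℕ) : Matrix (Fin (2 ^ k)) (Fin (2 ^ k)) ℝ :=
  Matrix.diagonal (fun i => if (i : ℕ) = 0 then 1 else 0)

/-- `J_k' = diag(0,...,0,1)` of order `2^k`. -/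
noncomputable def Jmat' (k : ℕ) : Matrix (Fin (2 ^ k)) (Fin (2 ^ k)) ℝ :=
  Matrix.diagonal (fun i => if (i : ℕ) = 2 ^ k - 1 then 1 else 0)

/-- The equivalence identifying `Fin (2^k) ⊕ Fin (2^k)` with `Fin (2^(k+1))`. -/
def blockEquiv (k : ℕ) : Fin (2 ^ k) ⊕ Fin (2 ^ k) ≃ Fin (2 ^ (k + 1)) :=
  finSumFinEquiv.trans (finCongr (by rw [pow_succ, mul_two]))

/-- The adjacency matrices `A_k`, defined recursively by `A_0 = (0)` and
`A_{k+1} = [[A_k, J_k], [J_k', A_k]]` in block form. -/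
noncomputable def Amat : (k : ℕ) → Matrix (Fin (2 ^ k)) (Fin (2 ^ k)) ℝ
  | 0 => 0
  | (k + 1) => Matrix.reindex (blockEquiv k) (blockEquiv k)
      (Matrix.fromBlocks (Amat k) (Jmat k) (Jmat' k) (Amat k))

/-- `T_k = A_k - λ I`. -/
noncomputable def Tmat (k : ℕ) (l : ℝ) : Matrix (Fin (2 ^ k)) (Fin (2 ^ k)) ℝ :=
  Amat k - l • 1

/-- Characteristic polynomial value `χ_k(λ) = det (A_k - λ I)`. -/
noncomputable def chiA (k : ℕ) (l : ℝ) : ℝ := (Tmat k l).det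

/-- Submatrix obtained by deleting the top row and the rightmost column. -/
noncomputable def delTopRight {n : ℕ} (M : Matrix (Fin n) (Fin n) ℝ) :
    Matrix (Fin (n - 1)) (Fin (n - 1)) ℝ :=
  Matrix.of fun i j => M ⟨i.1 + 1, by have := i.isLt; omega⟩ ⟨j.1, by have := j.isLt; omega⟩

/-- Submatrix obtained by deleting the bottom row and the rightmost column. -/
noncomputable def delBotRight {n : ℕ} (M : Matrix (Fin n) (Fin n) ℝ) :
    Matrix (Fin (n - 1)) (Fin (n - 1)) ℝ :=
  Matrix.of fun i j => M ⟨i.1, by have := i.isLt; omega⟩ ⟨j.1, by have := j.isLt; omega⟩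

/-- `φ_k = det Q_k`, where `Q_k` is `T_k` with top row and right column deleted. -/
noncomputable def phiA (k : ℕ) (l : ℝ) : ℝ := (delTopRight (Tmat k l)).det

/-- `ψ_k = det P_k`, where `P_k` is `T_k` with bottom row and right column deleted. -/
noncomputable def psiA (k : ℕ) (l : ℝ) : ℝ := (delBotRight (Tmat k l)).det

/- ### Auxiliary lemmas -/

lemma pow_succ_aux (k : ℕ) : (2:ℕ)^(k+1) = 2^k + 2^k := by rw [pow_succ]; omega

lemma one_le_pow_aux (k : ℕ) : (1:ℕ) ≤ 2^k := Nat.one_le_two_pow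

lemma blockEquiv_apply_inl (k : ℕ) (i : Fin (2^k)) :
    ((blockEquiv k (Sum.inl i)) : ℕ) = i.1 := by
  simp [blockEquiv]

lemma blockEquiv_apply_inr (k : ℕ) (i : Fin (2^k)) :
    ((blockEquiv k (Sum.inr i)) : ℕ) = 2^k + i.1 := by
  simp [blockEquiv]; omega

lemma blockEquiv_symm (k : ℕ) (m : Fin (2^(k+1))) :
    (blockEquiv k).symm m =
      if h : m.1 < 2^k then Sum.inl ⟨m.1, h⟩
      else Sum.inr ⟨m.1 - 2^k, by have := m.isLt; have := pow_succ_aux k; omega⟩ := by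
  rw [Equiv.symm_apply_eq]
  split
  next h => exact Fin.ext ((blockEquiv_apply_inl k ⟨m.1, h⟩).symm)
  next h =>
    refine Fin.ext ?_
    rw [blockEquiv_apply_inr]
    simp only [Fin.val_mk]
    omega

/-- The equivalence identifying `Fin (2^k) ⊕ Fin (2^k - 1)` with `Fin (2^(k+1) - 1)`. -/
def halfEquiv (k : ℕ) : Fin (2 ^ k) ⊕ Fin (2 ^ k - 1) ≃ Fin (2 ^ (k + 1) - 1) :=
  finSumFinEquiv.trans (finCongr (by have := pow_succ_aux k; have := one_le_pow_aux k; omega))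

lemma halfEquiv_apply_inl (k : ℕ) (i : Fin (2^k)) :
    ((halfEquiv k (Sum.inl i)) : ℕ) = i.1 := by
  simp [halfEquiv]

lemma halfEquiv_apply_inr (k : ℕ) (i : Fin (2^k - 1)) :
    ((halfEquiv k (Sum.inr i)) : ℕ) = 2^k + i.1 := by
  simp [halfEquiv]

lemma halfEquiv_symm (k : ℕ) (m : Fin (2^(k+1) - 1)) :
    (halfEquiv k).symm m =
      if h : m.1 < 2^k then Sum.inl ⟨m.1, h⟩
      else Sum.inr ⟨m.1 - 2^k, by have := m.isLt; have := pow_succ_aux k; omega⟩ := by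
  rw [Equiv.symm_apply_eq]
  split
  next h => exact Fin.ext ((halfEquiv_apply_inl k ⟨m.1, h⟩).symm)
  next h =>
    refine Fin.ext ?_
    rw [halfEquiv_apply_inr]
    simp only [Fin.val_mk]
    omega

/-- Top-right block of `P_{k+1}`. -/
noncomputable def Bmat (k : ℕ) : Matrix (Fin (2^k)) (Fin (2^k - 1)) ℝ :=
  Matrix.of fun i j => Jmat k i ⟨j.1, by have := j.isLt; omega⟩

lemma Tmat_succ (k : ℕ) (l : ℝ) :
    Tmat (k+1) l = Matrix.reindex (blockEquiv k) (blockEquiv k)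
      (Matrix.fromBlocks (Tmat k l) (Jmat k) (Jmat' k) (Tmat k l)) := by
  unfold Tmat
  show Matrix.reindex (blockEquiv k) (blockEquiv k)
      (Matrix.fromBlocks (Amat k) (Jmat k) (Jmat' k) (Amat k)) - l • 1 = _
  have h1 : (1 : Matrix (Fin (2^(k+1))) (Fin (2^(k+1))) ℝ) =
      Matrix.reindex (blockEquiv k) (blockEquiv k) 1 := by
    simp [Matrix.reindex_apply, Matrix.submatrix_one_equiv]
  rw [h1]
  ext i j
  simp only [Matrix.sub_apply, Matrix.smul_apply, Matrix.reindex_apply, Matrix.submatrix_apply]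
  rcases (blockEquiv k).symm i with a | a <;> rcases (blockEquiv k).symm j with b | b <;>
    simp [Matrix.fromBlocks, Matrix.one_apply, Tmat, Matrix.sub_apply, Matrix.smul_apply]

lemma delBotRight_succ (k : ℕ) (l : ℝ) :
    delBotRight (Tmat (k+1) l) = Matrix.reindex (halfEquiv k) (halfEquiv k)
      (Matrix.fromBlocks (Tmat k l) (Bmat k) 0 (delBotRight (Tmat k l))) := by
  ext i j
  rw [Matrix.reindex_apply, Matrix.submatrix_apply, halfEquiv_symm, halfEquiv_symm]
  have hi := i.isLt
  have hj := j.isLt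
  have hpow := pow_succ_aux k
  have hone := one_le_pow_aux k
  have hL : delBotRight (Tmat (k+1) l) i j =
      (Matrix.fromBlocks (Tmat k l) (Jmat k) (Jmat' k) (Tmat k l))
        ((blockEquiv k).symm ⟨i.1, by omega⟩) ((blockEquiv k).symm ⟨j.1, by omega⟩) := by
    rw [delBotRight, Matrix.of_apply, Tmat_succ, Matrix.reindex_apply, Matrix.submatrix_apply]
  rw [hL, blockEquiv_symm, blockEquiv_symm]
  simp only [Fin.val_mk]
  split
  next h =>
    split
    next h' => rfl
    next h' => rfl
  next h =>
    split
    next h' =>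
      -- bottom-left block: `Jmat'` entry vanishes
      simp only [Matrix.fromBlocks_apply₂₁, Jmat', Matrix.diagonal_apply, Matrix.zero_apply]
      split
      · split
        · omega
        · rfl
      · rfl
    next h' => rfl

lemma psiA_zero (l : ℝ) : psiA 0 l = 1 := by
  have : IsEmpty (Fin (2^0 - 1)) := by
    constructor; intro i; have := i.isLt; omega
  simp [psiA, Matrix.det_isEmpty]

lemma psiA_succ (k : ℕ) (l : ℝ) : psiA (k+1) l = chiA k l * psiA k l := by
  rw [psiA, delBotRight_succ, Matrix.det_reindex_self, Matrix.det_fromBlocks_zero₂₁]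
  rfl

/-- `ψ_k = ∏_{i=0}^{k-1} χ_i` for all `k ≥ 1`. -/
theorem psiA_eq_prod (k : ℕ) (hk : 1 ≤ k) (l : ℝ) :
    psiA k l = ∏ i ∈ Finset.range k, chiA i l := by
  clear hk
  induction k with
  | zero => simp [psiA_zero]
  | succ k ih => rw [psiA_succ, ih, Finset.prod_range_succ]; ring
end

section
/- The characteristic polynomial of the matrix A_N equals χ_N(λ) = U_{N+1}(-λ/2) · Π_{i=0}^{N-1} ( U_i(-λ/2) )^{2^{N-i-1}} for all N ≥ 1, where U_k is the Chebyshev polynomial of the second kind of degree k. -/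
open Matrix Polynomial

/-!
Write `T_k = A_k - λ I`, `n = 2 ^ k` and `α, α', β, β'` for the corner cofactors
`adj T_k (n-1) 0`, `adj T_k 0 (n-1)`, `adj T_k (n-1) (n-1)`, `adj T_k 0 0`.
As `T_{k+1} = [[T_k, E₀₀], [E_{n-1,n-1}, T_k]]` differs from `diag(T_k, T_k)` in two rows only,
expanding determinants linearly in those rows gives
`χ_{k+1} = χ_k² - α α'`, `α_{k+1} = -α β`, `α'_{k+1} = -α' β'`,
`β_{k+1} = χ_k β`, `β'_{k+1} = χ_k β'`.
With `P_k = ∏_{i<k} U_i ^ 2 ^ (k-i-1)` these are solved by `χ_k = U_{k+1} P_k`, `α α' = P_k²`,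
`β = β' = U_k P_k`; the only identity needed is `U_{k+1}² - U_k U_{k+2} = 1`.
-/

namespace Polynomial.Chebyshev

variable {R : Type*} [CommRing R]

theorem U_add_one_sq_sub_U_mul_U_add_two (n : ℕ) :
    U R (n + 1) ^ 2 - U R n * U R (n + 2) = 1 := by
  induction n with
  | zero => simp [U_two]; ring
  | succ n ih =>
    have h₂ := U_add_two R n
    have h₃ := U_add_two R (n + 1)
    push_cast
    linear_combination (norm := ring_nf) ih - U R (n + 1) * h₃ + U R (n + 2) * h₂

noncomputable def chebProd (x : R) (N : ℕ) : R :=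
  ∏ i ∈ Finset.range N, (U R i).eval x ^ (2 ^ (N - i - 1))

theorem chebProd_zero (x : R) : chebProd x 0 = 1 := rfl

theorem chebProd_succ (x : R) (N : ℕ) :
    chebProd x (N + 1) = (U R N).eval x * chebProd x N ^ 2 := by
  rw [chebProd, chebProd, Finset.prod_range_succ, ← Finset.prod_pow, Nat.add_sub_cancel_left,
    Nat.sub_self, pow_zero, pow_one, mul_comm]
  congr 1
  refine Finset.prod_congr rfl fun i hi => ?_
  have hexp : N + 1 - i - 1 = N - i - 1 + 1 := by have := Finset.mem_range.mp hi; omega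
  rw [hexp, pow_succ, pow_mul]

end Polynomial.Chebyshev

namespace Matrix

variable {ι R : Type*} [Fintype ι] [DecidableEq ι] [CommRing R]

def linkBlocks (T : Matrix ι ι R) (a b : ι) : Matrix (ι ⊕ ι) (ι ⊕ ι) R :=
  fromBlocks T (single a a 1) (single b b 1) T

theorem adjugate_linkBlocks_swap (T : Matrix ι ι R) (a b : ι) (i j : ι ⊕ ι) :
    adjugate (linkBlocks T b a) i j = adjugate (linkBlocks T a b) i.swap j.swap := by
  have h : (linkBlocks T a b).submatrix (Equiv.sumComm ι ι) (Equiv.sumComm ι ι) =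
      linkBlocks T b a :=
    fromBlocks_submatrix_sum_swap_sum_swap _ _ _ _
  rw [← h, adjugate_submatrix_equiv_self]
  rfl

theorem det_fromBlocks_updateRow_inl_updateRow_inr (X Y : Matrix ι ι R) (a b c d : ι) :
    (((fromBlocks X 0 0 Y).updateRow (.inl a) (Pi.single (.inr c) 1)).updateRow (.inr b)
      (Pi.single (.inl d) 1)).det = -(adjugate X d a * adjugate Y c b) := by
  set N := ((fromBlocks X 0 0 Y).updateRow (.inl a) (Pi.single (.inr c) 1)).updateRow (.inr b)
      (Pi.single (.inl d) 1)
  have hswap : N.submatrix (Equiv.swap (.inl a) (.inr b)) id =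
      fromBlocks (X.updateRow a (Pi.single d 1)) 0 0 (Y.updateRow b (Pi.single c 1)) := by
    ext (i | i) (j | j) <;>
      simp [N, Equiv.swap_apply_def, updateRow_apply, Pi.single_apply] <;> split_ifs <;> simp_all
  have hperm := det_permute (Equiv.swap (.inl a) (.inr b)) N
  rw [hswap, det_fromBlocks_zero₂₁, Equiv.Perm.sign_swap Sum.inl_ne_inr] at hperm
  rw [adjugate_apply, adjugate_apply, hperm]
  simp

theorem adjugate_linkBlocks_inr_inl (T : Matrix ι ι R) (a b c : ι) :
    adjugate (linkBlocks T a b) (.inr c) (.inl a) = -(adjugate T b a * adjugate T c b) := by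
  rw [adjugate_apply]
  set N := (linkBlocks T a b).updateRow (.inl a) (Pi.single (.inr c) 1)
  have hrow : N (.inr b) = Pi.single (.inl b) 1 + fromBlocks T 0 0 T (.inr b) := by
    ext (j | j) <;> simp [N, linkBlocks, Pi.single_apply, single_apply, eq_comm]
  have hsingle : N.updateRow (.inr b) (Pi.single (.inl b) 1) =
      ((fromBlocks T 0 0 T).updateRow (.inl a) (Pi.single (.inr c) 1)).updateRow (.inr b)
        (Pi.single (.inl b) 1) := by
    ext (i | i) (j | j) <;> simp [N, linkBlocks, updateRow_apply, single_apply] <;> grind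
  have hblock : N.updateRow (.inr b) (fromBlocks T 0 0 T (.inr b)) =
      fromBlocks (T.updateRow a 0) (single a c 1) 0 T := by
    ext (i | i) (j | j) <;>
      simp [N, linkBlocks, updateRow_apply, single_apply, Pi.single_apply] <;> grind
  rw [← updateRow_eq_self N (.inr b), hrow, det_updateRow_add, hsingle, hblock,
    det_fromBlocks_zero₂₁, det_eq_zero_of_row_eq_zero a (by simp),
    det_fromBlocks_updateRow_inl_updateRow_inr]
  ring

theorem adjugate_linkBlocks_inl_inr (T : Matrix ι ι R) (a b c : ι) :
    adjugate (linkBlocks T a b) (.inl c) (.inr b) = -(adjugate T a b * adjugate T c a) := by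
  rw [← adjugate_linkBlocks_inr_inl T b a c, adjugate_linkBlocks_swap]
  rfl

theorem adjugate_linkBlocks_inr_inr (T : Matrix ι ι R) (a b : ι) :
    adjugate (linkBlocks T a b) (.inr b) (.inr b) = T.det * adjugate T b b := by
  have hblock : (linkBlocks T a b).updateRow (.inr b) (Pi.single (.inr b) 1) =
      fromBlocks T (single a a 1) 0 (T.updateRow b (Pi.single b 1)) := by
    ext (i | i) (j | j) <;>
      simp +contextual [linkBlocks, updateRow_apply, single_apply, Pi.single_apply, eq_comm]
  rw [adjugate_apply, adjugate_apply, hblock, det_fromBlocks_zero₂₁]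

theorem adjugate_linkBlocks_inl_inl (T : Matrix ι ι R) (a b : ι) :
    adjugate (linkBlocks T a b) (.inl a) (.inl a) = T.det * adjugate T a a := by
  rw [← adjugate_linkBlocks_inr_inr T b a, adjugate_linkBlocks_swap]
  rfl

theorem det_linkBlocks (T : Matrix ι ι R) (a b : ι) :
    (linkBlocks T a b).det = T.det ^ 2 - adjugate T b a * adjugate T a b := by
  set M := linkBlocks T a b
  have hrow : M (.inl a) = fromBlocks T 0 (single b b 1) T (.inl a) + Pi.single (.inr a) 1 := by
    ext (j | j) <;> simp [M, linkBlocks, Pi.single_apply, single_apply, eq_comm]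
  have hblock : M.updateRow (.inl a) (fromBlocks T 0 (single b b 1) T (.inl a)) =
      fromBlocks T 0 (single b b 1) T := by
    ext (i | i) (j | j) <;> simp [M, linkBlocks, updateRow_apply, single_apply] <;> grind
  rw [← updateRow_eq_self M (.inl a), hrow, det_updateRow_add, hblock, det_fromBlocks_zero₁₂,
    ← adjugate_apply, adjugate_linkBlocks_inr_inl]
  ring

end Matrix

def firstIdx (k : ℕ) : Fin (2 ^ k) := ⟨0, Nat.two_pow_pos k⟩

def lastIdx (k : ℕ) : Fin (2 ^ k) := ⟨2 ^ k - 1, Nat.sub_one_lt (Nat.two_pow_pos k).ne'⟩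

theorem blockEquiv_inl_firstIdx (k : ℕ) : blockEquiv k (.inl (firstIdx k)) = firstIdx (k + 1) :=
  rfl

theorem blockEquiv_inr_lastIdx (k : ℕ) : blockEquiv k (.inr (lastIdx k)) = lastIdx (k + 1) := by
  ext
  simp [blockEquiv, lastIdx, pow_succ]
  omega

theorem Tmat_succ_s12 (k : ℕ) (l : ℝ) :
    Tmat (k + 1) l = reindex (blockEquiv k) (blockEquiv k)
      (linkBlocks (Tmat k l) (firstIdx k) (lastIdx k)) := by
  have hJ : Jmat k = single (firstIdx k) (firstIdx k) 1 := by
    rw [Jmat, ← diagonal_single]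
    congr with i
    simp only [Pi.single_apply, firstIdx, Fin.ext_iff]
  have hJ' : Jmat' k = single (lastIdx k) (lastIdx k) 1 := by
    rw [Jmat', ← diagonal_single]
    congr with i
    simp only [Pi.single_apply, lastIdx, Fin.ext_iff]
  have hT : Tmat (k + 1) l = reindex (blockEquiv k) (blockEquiv k)
      (fromBlocks (Amat k) (Jmat k) (Jmat' k) (Amat k) - l • 1) := by
    ext i j
    simp [Tmat, Amat, one_apply]
  rw [hT, hJ, hJ']
  congr 1
  ext (i | i) (j | j) <;> simp [linkBlocks, Tmat, one_apply]

theorem adjugate_Tmat_succ (k : ℕ) (l : ℝ) (i j : Fin (2 ^ k) ⊕ Fin (2 ^ k)) :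
    adjugate (Tmat (k + 1) l) (blockEquiv k i) (blockEquiv k j) =
      adjugate (linkBlocks (Tmat k l) (firstIdx k) (lastIdx k)) i j := by
  simp [Tmat_succ_s12]

theorem chiA_succ (k : ℕ) (l : ℝ) :
    chiA (k + 1) l = chiA k l ^ 2 -
      adjugate (Tmat k l) (lastIdx k) (firstIdx k) *
        adjugate (Tmat k l) (firstIdx k) (lastIdx k) := by
  rw [chiA, Tmat_succ_s12, det_reindex_self, det_linkBlocks, chiA]

open Polynomial.Chebyshev in
theorem chiA_and_adjugate_Tmat_eq (k : ℕ) (l : ℝ) :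
    chiA k l = (U ℝ (k + 1)).eval (-l / 2) * chebProd (-l / 2) k ∧
    adjugate (Tmat k l) (lastIdx k) (firstIdx k) * adjugate (Tmat k l) (firstIdx k) (lastIdx k) =
      chebProd (-l / 2) k ^ 2 ∧
    adjugate (Tmat k l) (lastIdx k) (lastIdx k) = (U ℝ k).eval (-l / 2) * chebProd (-l / 2) k ∧
    adjugate (Tmat k l) (firstIdx k) (firstIdx k) =
      (U ℝ k).eval (-l / 2) * chebProd (-l / 2) k := by
  induction k with
  | zero =>
    have : Subsingleton (Fin (2 ^ 0)) := Fin.subsingleton_one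
    have hlast : lastIdx 0 = firstIdx 0 := Subsingleton.elim _ _
    simp [chiA, Tmat, Amat, chebProd_zero, adjugate_subsingleton, det_unique, hlast]
    ring
  | succ k ih =>
    obtain ⟨hχ, hα, hβ, hβ'⟩ := ih
    have hP := chebProd_succ (-l / 2) k
    have hU := congrArg (eval (-l / 2)) (U_add_one_sq_sub_U_mul_U_add_two (R := ℝ) k)
    simp only [eval_sub, eval_pow, eval_mul, eval_one] at hU
    push_cast
    rw [← blockEquiv_inr_lastIdx, ← blockEquiv_inl_firstIdx, adjugate_Tmat_succ,
      adjugate_Tmat_succ, adjugate_Tmat_succ, adjugate_Tmat_succ, adjugate_linkBlocks_inr_inl,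
      adjugate_linkBlocks_inl_inr, adjugate_linkBlocks_inr_inr, adjugate_linkBlocks_inl_inl,
      chiA_succ, ← chiA, hP, hχ, hβ, hβ']
    refine ⟨?_, ?_, ?_, ?_⟩
    · linear_combination (norm := ring_nf) chebProd (-l / 2) k ^ 2 * hU - hα
    · linear_combination (eval (-l / 2) (U ℝ k) * chebProd (-l / 2) k) ^ 2 * hα
    · ring
    · ring

theorem chiA_eq_chebyshev_general (N : ℕ) (l : ℝ) :
    chiA N l = (Polynomial.Chebyshev.U ℝ (N + 1)).eval (-l / 2) *
      ∏ i ∈ Finset.range N, ((Polynomial.Chebyshev.U ℝ i).eval (-l / 2)) ^ (2 ^ (N - i - 1)) :=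
  (chiA_and_adjugate_Tmat_eq N l).1

/-- The characteristic polynomial of `A_N` equals
`χ_N(λ) = U_{N+1}(-λ/2) * ∏_{i=0}^{N-1} (U_i(-λ/2))^(2^(N-i-1))` for all `N ≥ 1`. -/
theorem chiA_eq_chebyshev (N : ℕ) (hN : 1 ≤ N) (l : ℝ) :
    chiA N l = (Polynomial.Chebyshev.U ℝ (N + 1)).eval (-l / 2) *
      ∏ i ∈ Finset.range N, ((Polynomial.Chebyshev.U ℝ i).eval (-l / 2)) ^ (2 ^ (N - i - 1)) :=
  chiA_eq_chebyshev_general N l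
end
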